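/- Let B > 1 and 0 < d ≤ K be real numbers. Let b : ℕ → ℝ be a sequence with n · b n / Bⁿ → 1 as n → ∞, let z : ℕ → ℝ satisfy d · b n ≤ z n ≤ K · b n for all n ≥ 1, and let zp : ℕ → ℝ satisfy 0 ≤ zp n for all n and zp n = z n / 2 for all odd n. Then there exist a real c > 0 and N₀ ∈ ℕ such that for all N ≥ N₀, Σ_{n=1}^N zp n ≥ c · Σ_{n=1}^N z n. -/

import Mathlib

/-!
From `n · b n / Bⁿ → 1` we get `b n → ∞` and `b (n + 1) / b n → B`, so eventually
`b (n + 1) ≤ 2B · b n`. At an odd index `zp n = z n / 2 ≥ d · b n / 2`, and the next (even)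
term satisfies `z (n + 1) ≤ K · b (n + 1) ≤ (4KB / d) · zp n`. Hence eventually
`z (n + 1) ≤ C · (zp (n + 1) + zp n)`, which sums to `Σ z ≤ A + 2C · Σ zp` for a fixed `A`.
The partial sums of `zp` are unbounded (already along odd indices), so they eventually absorb
`A`, and `c = 1 / (1 + 2C)` works.
-/

open Filter Finset Topology

section PartialSums

variable {f z zp : ℕ → ℝ} {C : ℝ}

lemma monotone_sum_Icc_one (hf : ∀ n, 0 ≤ f n) :
    Monotone fun N => ∑ n ∈ Icc 1 N, f n :=
  fun _ _ h => sum_le_sum_of_subset_of_nonneg (Icc_subset_Icc_right h) fun i _ _ => hf i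

lemma tendsto_sum_Icc_one_atTop (hf : ∀ n, 0 ≤ f n) (hunb : ∀ r, ∃ n, 1 ≤ n ∧ r ≤ f n) :
    Tendsto (fun N => ∑ n ∈ Icc 1 N, f n) atTop atTop :=
  tendsto_atTop_atTop_of_monotone (monotone_sum_Icc_one hf) fun r =>
    let ⟨n, hn, hr⟩ := hunb r
    ⟨n, hr.trans (single_le_sum (fun i _ => hf i) (mem_Icc.2 ⟨hn, le_rfl⟩))⟩

-- Each `zp n` is charged by both `z n` and `z (n + 1)`, hence two partial sums of `zp`.
lemma sum_Icc_one_le_of_le_mul_add (hzp : ∀ n, 0 ≤ zp n) (hC : 0 ≤ C) {M : ℕ}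
    (hz : ∀ n, M ≤ n → z (n + 1) ≤ C * (zp (n + 1) + zp n)) {N : ℕ} (hN : M ≤ N) :
    ∑ n ∈ Icc 1 (N + 1), z n ≤
      ∑ n ∈ Icc 1 (M + 1), z n + C * (∑ n ∈ Icc 1 (N + 1), zp n + ∑ n ∈ Icc 1 N, zp n) := by
  induction N, hN using Nat.le_induction with
  | base =>
    have := sum_nonneg fun i (_ : i ∈ Icc 1 (M + 1)) => hzp i
    have := sum_nonneg fun i (_ : i ∈ Icc 1 M) => hzp i
    nlinarith
  | succ N hMN ih =>
    have hT := sum_Icc_succ_top (by omega : 1 ≤ N + 1) zp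
    have h2 : 1 ≤ N + 1 + 1 := by omega
    rw [sum_Icc_succ_top h2 z, sum_Icc_succ_top h2 zp]
    linear_combination ih + hz (N + 1) (by omega) - C * hT

lemma exists_pos_mul_sum_Icc_one_le (hzp : ∀ n, 0 ≤ zp n) (hC : 0 ≤ C)
    (hz : ∀ᶠ n in atTop, z (n + 1) ≤ C * (zp (n + 1) + zp n))
    (htop : Tendsto (fun N => ∑ n ∈ Icc 1 N, zp n) atTop atTop) :
    ∃ c, 0 < c ∧ ∀ᶠ N in atTop, c * ∑ n ∈ Icc 1 N, z n ≤ ∑ n ∈ Icc 1 N, zp n := by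
  obtain ⟨M, hM⟩ := eventually_atTop.1 hz
  refine ⟨1 / (1 + 2 * C), by positivity, ?_⟩
  filter_upwards [eventually_ge_atTop (M + 1),
    htop.eventually_ge_atTop (∑ n ∈ Icc 1 (M + 1), z n)] with N hN hA
  obtain ⟨N, rfl⟩ : ∃ k, N = k + 1 := ⟨N - 1, by omega⟩
  have hsum := sum_Icc_one_le_of_le_mul_add hzp hC hM (by omega : M ≤ N)
  have hmono := monotone_sum_Icc_one hzp (Nat.le_succ N)
  rw [div_mul_eq_mul_div, one_mul, div_le_iff₀ (by positivity)]
  nlinarith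

end PartialSums

section Growth

variable {B : ℝ} {b : ℕ → ℝ}

lemma tendsto_pow_div_natCast_atTop (hB : 1 < B) :
    Tendsto (fun n : ℕ => B ^ n / n) atTop atTop := by
  have hpos : ∀ᶠ n : ℕ in atTop, (n : ℝ) ^ 1 / B ^ n ∈ Set.Ioi 0 := by
    filter_upwards [eventually_ge_atTop 1] with n hn
    exact div_pos (pow_pos (Nat.cast_pos.2 hn : (0 : ℝ) < n) 1) (pow_pos (by linarith) n)
  have hinv := (tendsto_nhdsWithin_iff.2
    ⟨tendsto_pow_const_div_const_pow_of_one_lt 1 hB, hpos⟩).inv_tendsto_nhdsGT_zero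
  exact hinv.congr fun n => by simp only [Pi.inv_apply, pow_one, inv_div]

lemma tendsto_atTop_of_tendsto_natCast_mul_div_pow (hB : 1 < B)
    (hb : Tendsto (fun n : ℕ => (n : ℝ) * b n / B ^ n) atTop (𝓝 1)) :
    Tendsto b atTop atTop := by
  refine (hb.pos_mul_atTop one_pos (tendsto_pow_div_natCast_atTop hB)).congr' ?_
  filter_upwards [eventually_ge_atTop 1] with n hn
  have : (n : ℝ) ≠ 0 := by positivity
  field_simp

lemma tendsto_succ_div_of_tendsto_natCast_mul_div_pow (hB : 1 < B)
    (hb : Tendsto (fun n : ℕ => (n : ℝ) * b n / B ^ n) atTop (𝓝 1)) :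
    Tendsto (fun n => b (n + 1) / b n) atTop (𝓝 B) := by
  have hu := ((tendsto_add_atTop_iff_nat 1).2 hb).div hb one_ne_zero
  have hn : Tendsto (fun n : ℕ => (n : ℝ) / (n + 1)) atTop (𝓝 1) :=
    tendsto_natCast_div_add_atTop 1
  have hlim := (hu.mul hn).const_mul B
  rw [div_one, one_mul, mul_one] at hlim
  refine hlim.congr' ?_
  filter_upwards [eventually_ge_atTop 1,
    (tendsto_atTop_of_tendsto_natCast_mul_div_pow hB hb).eventually_gt_atTop 0] with n hn hbn
  have : (n : ℝ) ≠ 0 := by positivity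
  have : B ≠ 0 := by positivity
  simp only [Pi.div_apply]
  push_cast
  field_simp
  ring

lemma eventually_succ_le_two_mul (hB : 1 < B)
    (hb : Tendsto (fun n : ℕ => (n : ℝ) * b n / B ^ n) atTop (𝓝 1)) :
    ∀ᶠ n in atTop, b (n + 1) ≤ 2 * B * b n := by
  filter_upwards [(tendsto_succ_div_of_tendsto_natCast_mul_div_pow hB hb).eventually_le_const
    (by linarith : B < 2 * B),
    (tendsto_atTop_of_tendsto_natCast_mul_div_pow hB hb).eventually_gt_atTop 0] with n hn hbn
  exact (div_le_iff₀ hbn).1 hn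

end Growth

/-- If `b n ~ Bⁿ/n` with `B > 1`, `d·b n ≤ z n ≤ K·b n`, and `zp n = z n / 2`
for odd `n` (and `zp n ≥ 0` always), then eventually the partial sums of `zp`
are at least a fixed positive proportion of the partial sums of `z`. -/
theorem stmt_2 (B d K : ℝ) (hB : 1 < B) (hd : 0 < d) (hdK : d ≤ K)
    (b z zp : ℕ → ℝ)
    (hb : Tendsto (fun n : ℕ => (n : ℝ) * b n / B ^ n) atTop (nhds 1))
    (hz_lb : ∀ n, 1 ≤ n → d * b n ≤ z n)
    (hz_ub : ∀ n, 1 ≤ n → z n ≤ K * b n)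
    (hzp_nonneg : ∀ n, 0 ≤ zp n)
    (hzp_odd : ∀ n, Odd n → zp n = z n / 2) :
    ∃ c : ℝ, 0 < c ∧ ∃ N₀ : ℕ, ∀ N, N₀ ≤ N →
      c * ∑ n ∈ Finset.Icc 1 N, z n ≤ ∑ n ∈ Finset.Icc 1 N, zp n := by
  have hK : 0 < K := hd.trans_le hdK
  have hb_top := tendsto_atTop_of_tendsto_natCast_mul_div_pow hB hb
  have hz_step : ∀ᶠ n in atTop, z (n + 1) ≤ (2 + 4 * K * B / d) * (zp (n + 1) + zp n) := by
    filter_upwards [eventually_succ_le_two_mul hB hb, eventually_ge_atTop 1] with n hstep hn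
    have hC : 0 ≤ 4 * K * B / d := by positivity
    have := hzp_nonneg n
    have := hzp_nonneg (n + 1)
    rcases Nat.even_or_odd n with hev | hodd
    · have := hzp_odd (n + 1) hev.add_one
      nlinarith
    · have hzn : d * b n ≤ 2 * zp n := by linarith [hz_lb n hn, hzp_odd n hodd]
      have : z (n + 1) ≤ 4 * K * B / d * zp n := calc
        z (n + 1) ≤ K * b (n + 1) := hz_ub (n + 1) (by omega)
        _ ≤ K * (2 * B * b n) := by gcongr
        _ = 2 * K * B / d * (d * b n) := by field_simp
        _ ≤ 2 * K * B / d * (2 * zp n) := by gcongr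
        _ = _ := by ring
      nlinarith
  have hzp_top : Tendsto (fun N => ∑ n ∈ Icc 1 N, zp n) atTop atTop := by
    refine tendsto_sum_Icc_one_atTop hzp_nonneg fun r => ?_
    obtain ⟨m, hm⟩ := eventually_atTop.1 (hb_top.eventually_ge_atTop (2 * r / d))
    refine ⟨2 * m + 1, by omega, ?_⟩
    have := hz_lb (2 * m + 1) (by omega)
    have := (div_le_iff₀ hd).1 (hm (2 * m + 1) (by omega))
    rw [hzp_odd _ (odd_two_mul_add_one m)]
    linarith
  obtain ⟨c, hc, hsum⟩ :=
    exists_pos_mul_sum_Icc_one_le hzp_nonneg (by positivity) hz_step hzp_top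
  exact ⟨c, hc, eventually_atTop.1 hsum⟩
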